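/- One has lim_{c → 0⁺} A(c) = k₂/θ², and for every x ∈ ℝ, lim_{c → 0⁺} V^c(x) = y_v/ρ. -/

import Mathlib

/-- `h_A(y) = A θ e^{θ y} − A θ e^{−θ y} − 2 k₂ y`. -/
noncomputable def hFun (θ k₂ A y : ℝ) : ℝ :=
  A * θ * Real.exp (θ * y) - A * θ * Real.exp (-(θ * y)) - 2 * k₂ * y

/-- `g(A) = −A e^{θ ȳ(A)} − A e^{−θ ȳ(A)} + k₂ ȳ(A)² + 2A`. -/
noncomputable def gFun (θ k₂ : ℝ) (ybar : ℝ → ℝ) (A : ℝ) : ℝ :=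
  -A * Real.exp (θ * ybar A) - A * Real.exp (-(θ * ybar A)) + k₂ * (ybar A) ^ 2 + 2 * A

/-- `φ_A(x) = A e^{θ(x−x_v)} + A e^{−θ(x−x_v)} − k₂ (x−x_v)² + k₀`. -/
noncomputable def phiFun (θ k₂ k₀ xv A x : ℝ) : ℝ :=
  A * Real.exp (θ * (x - xv)) + A * Real.exp (-(θ * (x - xv))) - k₂ * (x - xv) ^ 2 + k₀

/-- `V^c(x) = φ_{A(c)}(x)` on `(x_v − ȳ(c), x_v + ȳ(c))`, and `φ_{A(c)}(x_v) − c` otherwise. -/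
noncomputable def VFun (θ k₂ k₀ xv : ℝ) (Ac ybc : ℝ → ℝ) (c x : ℝ) : ℝ :=
  if xv - ybc c < x ∧ x < xv + ybc c then phiFun θ k₂ k₀ xv (Ac c) x
  else phiFun θ k₂ k₀ xv (Ac c) xv - c

/-!
With `K = k₂/θ²` and `t = θ ȳ(A(c))`, the equation `h_A(ȳ) = 0` reads `A sinh t = K t`, and the
half-angle formulas turn `g(A) = c` into `c = 4K · (t/2) (t/2 − tanh (t/2))`. The map
`u ↦ u (u − tanh u)` is even and strictly increasing on `[0, ∞)`, so `c → 0⁺` forces `t → 0`;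
hence `ȳ(c) → 0` and `A(c) = K · t / sinh t → K`. Finally `V^c(x_v) = 2A(c) + k₀`, while for
`x ≠ x_v` eventually `V^c(x) = 2A(c) + k₀ − c`, and both tend to `2K + k₀ = y_v/ρ`.
-/

open Real Filter Topology Set

namespace Real

theorem hasDerivAt_tanh (x : ℝ) : HasDerivAt tanh (cosh x ^ 2)⁻¹ x := by
  have h := (hasDerivAt_sinh x).div (hasDerivAt_cosh x) (cosh_pos x).ne'
  rwa [show sinh / cosh = tanh from funext fun y => (tanh_eq_sinh_div_cosh y).symm,
    ← sq, ← sq, cosh_sq_sub_sinh_sq, one_div] at h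

theorem strictMonoOn_sub_tanh : StrictMonoOn (fun u => u - tanh u) (Ici 0) := by
  have hd (u : ℝ) : HasDerivAt (fun u => u - tanh u) (1 - (cosh u ^ 2)⁻¹) u :=
    (hasDerivAt_id u).sub (hasDerivAt_tanh u)
  refine strictMonoOn_of_deriv_pos (convex_Ici 0)
    (continuous_iff_continuousAt.2 fun u => (hd u).continuousAt).continuousOn fun u hu => ?_
  rw [interior_Ici, mem_Ioi] at hu
  rw [(hd u).deriv, sub_pos]
  exact inv_lt_one_of_one_lt₀ (one_lt_pow₀ (one_lt_cosh.2 hu.ne') two_ne_zero)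

theorem sub_tanh_nonneg {u : ℝ} (hu : 0 ≤ u) : 0 ≤ u - tanh u := by
  simpa using strictMonoOn_sub_tanh.monotoneOn self_mem_Ici hu hu

theorem abs_lt_of_mul_sub_tanh_lt {u ε : ℝ} (hε : 0 ≤ ε)
    (h : u * (u - tanh u) < ε * (ε - tanh ε)) : |u| < ε := by
  have habs : |u| * (|u| - tanh |u|) = u * (u - tanh u) := by
    rcases abs_cases u with ⟨hu, -⟩ | ⟨hu, -⟩ <;> simp only [hu, tanh_neg]; ring
  by_contra! hle
  have := mul_le_mul hle (strictMonoOn_sub_tanh.monotoneOn hε (hε.trans hle) hle)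
    (sub_tanh_nonneg hε) (hε.trans hle)
  linarith

theorem tendsto_zero_of_tendsto_mul_sub_tanh {ι : Type*} {l : Filter ι} {f : ι → ℝ}
    (h : Tendsto (fun i => f i * (f i - tanh (f i))) l (𝓝 0)) : Tendsto f l (𝓝 0) := by
  refine Metric.tendsto_nhds.2 fun ε hε => ?_
  have hpos : 0 < ε * (ε - tanh ε) :=
    mul_pos hε (by simpa using strictMonoOn_sub_tanh self_mem_Ici hε.le hε)
  filter_upwards [h.eventually (gt_mem_nhds hpos)] with i hi
  rw [Real.dist_eq, sub_zero]
  exact abs_lt_of_mul_sub_tanh_lt hε.le hi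

theorem mul_sq_sub_mul_cosh_eq_of_mul_sinh_eq {A K t : ℝ} (h : A * sinh t = K * t) :
    K * t ^ 2 - 2 * A * (cosh t - 1) = 4 * K * (t / 2 * (t / 2 - tanh (t / 2))) := by
  have ht : t = 2 * (t / 2) := by ring
  set u := t / 2
  rw [ht, sinh_two_mul] at h
  rw [ht, cosh_two_mul, cosh_sq, tanh_eq_sinh_div_cosh]
  field_simp [(cosh_pos u).ne']
  linear_combination (-2 * sinh u) * h

theorem tendsto_self_div_sinh : Tendsto (fun t => t / sinh t) (𝓝[≠] 0) (𝓝 1) := by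
  have h := (hasDerivAt_sinh 0).tendsto_slope_zero.inv₀ (by simp)
  simpa [div_eq_mul_inv, mul_comm] using h

theorem tendsto_of_mul_sinh_eq {ι : Type*} {l : Filter ι} {A t : ι → ℝ} {K : ℝ}
    (hrel : ∀ᶠ i in l, A i * sinh (t i) = K * t i) (ht : Tendsto t l (𝓝[≠] 0)) :
    Tendsto A l (𝓝 K) := by
  have h := (tendsto_self_div_sinh.comp ht).const_mul K
  rw [mul_one] at h
  refine h.congr' ?_
  filter_upwards [hrel, ht.eventually self_mem_nhdsWithin] with i hi hti
  have : sinh (t i) ≠ 0 := sinh_ne_zero.2 hti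
  simp only [Function.comp]
  field_simp
  linarith

end Real

theorem mul_sinh_eq_of_hFun_eq_zero {θ k₂ A y : ℝ} (hθ : θ ≠ 0) (h : hFun θ k₂ A y = 0) :
    A * sinh (θ * y) = k₂ / θ ^ 2 * (θ * y) := by
  rw [hFun] at h
  rw [sinh_eq]
  field_simp
  linear_combination h

theorem gFun_eq {θ k₂ : ℝ} (hθ : θ ≠ 0) (ybar : ℝ → ℝ) (A : ℝ) :
    gFun θ k₂ ybar A = k₂ / θ ^ 2 * (θ * ybar A) ^ 2 - 2 * A * (cosh (θ * ybar A) - 1) := by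
  rw [gFun, cosh_eq]
  field_simp
  ring

theorem phiFun_self (θ k₂ k₀ xv A : ℝ) : phiFun θ k₂ k₀ xv A xv = 2 * A + k₀ := by
  simp only [phiFun, sub_self, mul_zero, neg_zero, exp_zero]
  ring

theorem VFun_self {θ k₂ k₀ xv c : ℝ} {Ac ybc : ℝ → ℝ} (h : 0 < ybc c) :
    VFun θ k₂ k₀ xv Ac ybc c xv = 2 * Ac c + k₀ := by
  rw [VFun, if_pos ⟨by linarith, by linarith⟩, phiFun_self]

theorem VFun_of_le_abs {θ k₂ k₀ xv c x : ℝ} {Ac ybc : ℝ → ℝ} (h : ybc c ≤ |x - xv|) :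
    VFun θ k₂ k₀ xv Ac ybc c x = 2 * Ac c + k₀ - c := by
  rw [VFun, if_neg, phiFun_self]
  rintro ⟨hl, hr⟩
  exact h.not_gt (abs_sub_lt_iff.2 ⟨by linarith, by linarith⟩)

theorem eventually_mul_sinh_eq {θ k₂ : ℝ} {ybarA Ac : ℝ → ℝ} (hθ : θ ≠ 0)
    (hybarA : ∀ A : ℝ, 0 < A → A < k₂ / θ ^ 2 → 0 < ybarA A ∧ hFun θ k₂ A (ybarA A) = 0)
    (hAc : ∀ c : ℝ, 0 < c → 0 < Ac c ∧ Ac c < k₂ / θ ^ 2 ∧ gFun θ k₂ ybarA (Ac c) = c) :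
    ∀ᶠ c in 𝓝[>] 0, Ac c * sinh (θ * ybarA (Ac c)) = k₂ / θ ^ 2 * (θ * ybarA (Ac c)) := by
  filter_upwards [self_mem_nhdsWithin] with c hc
  exact mul_sinh_eq_of_hFun_eq_zero hθ (hybarA _ (hAc c hc).1 (hAc c hc).2.1).2

theorem tendsto_mul_ybarA_Ac_zero {θ k₂ : ℝ} {ybarA Ac : ℝ → ℝ} (hK : k₂ / θ ^ 2 ≠ 0)
    (hybarA : ∀ A : ℝ, 0 < A → A < k₂ / θ ^ 2 → 0 < ybarA A ∧ hFun θ k₂ A (ybarA A) = 0)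
    (hAc : ∀ c : ℝ, 0 < c → 0 < Ac c ∧ Ac c < k₂ / θ ^ 2 ∧ gFun θ k₂ ybarA (Ac c) = c) :
    Tendsto (fun c => θ * ybarA (Ac c)) (𝓝[>] 0) (𝓝 0) := by
  have hθ : θ ≠ 0 := by rintro rfl; simp at hK
  set t := fun c => θ * ybarA (Ac c)
  have hdiv : Tendsto (fun c : ℝ => c / (4 * (k₂ / θ ^ 2))) (𝓝[>] 0) (𝓝 0) :=
    tendsto_nhdsWithin_of_tendsto_nhds
      (by simpa using (tendsto_id (x := 𝓝 (0 : ℝ))).div_const (4 * (k₂ / θ ^ 2)))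
  have hhalf := tendsto_zero_of_tendsto_mul_sub_tanh (f := fun c => t c / 2) <|
    hdiv.congr' <| by
      filter_upwards [self_mem_nhdsWithin, eventually_mul_sinh_eq hθ hybarA hAc] with c hc hs
      rw [div_eq_iff (by simpa using hK), mul_comm]
      exact (hAc c hc).2.2.symm.trans
        ((gFun_eq hθ _ _).trans (mul_sq_sub_mul_cosh_eq_of_mul_sinh_eq hs))
  simpa [mul_div_cancel₀] using hhalf.const_mul 2

theorem stmt_12_general (ρ θ k₂ k₀ xv yv : ℝ)
    (hk₀ : k₀ = yv / ρ - 2 * k₂ / θ ^ 2)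
    (ybarA : ℝ → ℝ)
    (hybarA : ∀ A : ℝ, 0 < A → A < k₂ / θ ^ 2 →
      0 < ybarA A ∧ hFun θ k₂ A (ybarA A) = 0)
    (Ac : ℝ → ℝ)
    (hAc : ∀ c : ℝ, 0 < c →
      0 < Ac c ∧ Ac c < k₂ / θ ^ 2 ∧ gFun θ k₂ ybarA (Ac c) = c) :
    Filter.Tendsto Ac (nhdsWithin 0 (Set.Ioi 0)) (nhds (k₂ / θ ^ 2)) ∧
    ∀ x : ℝ,
      Filter.Tendsto (fun c => VFun θ k₂ k₀ xv Ac (fun c => ybarA (Ac c)) c x)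
        (nhdsWithin 0 (Set.Ioi 0)) (nhds (yv / ρ)) := by
  have hK : 0 < k₂ / θ ^ 2 := (hAc 1 one_pos).1.trans (hAc 1 one_pos).2.1
  have hθ : θ ≠ 0 := by rintro rfl; simp at hK
  have hpos : ∀ᶠ c in 𝓝[>] 0, 0 < ybarA (Ac c) := by
    filter_upwards [self_mem_nhdsWithin] with c hc
    exact (hybarA _ (hAc c hc).1 (hAc c hc).2.1).1
  have ht := tendsto_mul_ybarA_Ac_zero hK.ne' hybarA hAc
  have hy : Tendsto (fun c => ybarA (Ac c)) (𝓝[>] 0) (𝓝 0) := by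
    simpa [hθ] using ht.const_mul θ⁻¹
  have hA : Tendsto Ac (𝓝[>] 0) (𝓝 (k₂ / θ ^ 2)) := by
    refine tendsto_of_mul_sinh_eq (eventually_mul_sinh_eq hθ hybarA hAc)
      (tendsto_nhdsWithin_iff.2 ⟨ht, ?_⟩)
    filter_upwards [hpos] with c hc
    exact mul_ne_zero hθ hc.ne'
  have hlim : Tendsto (fun c => 2 * Ac c + k₀) (𝓝[>] 0) (𝓝 (yv / ρ)) := by
    convert (hA.const_mul 2).add_const k₀ using 2
    rw [hk₀]
    ring
  refine ⟨hA, fun x => ?_⟩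
  rcases eq_or_ne x xv with rfl | hx
  · refine hlim.congr' ?_
    filter_upwards [hpos] with c hc
    exact (VFun_self (ybc := fun c => ybarA (Ac c)) hc).symm
  · have hlim' := hlim.sub (tendsto_nhdsWithin_of_tendsto_nhds tendsto_id)
    rw [sub_zero] at hlim'
    refine hlim'.congr' ?_
    filter_upwards [hy.eventually (gt_mem_nhds (abs_pos.2 (sub_ne_zero.2 hx)))] with c hc
    exact (VFun_of_le_abs (ybc := fun c => ybarA (Ac c)) hc.le).symm

theorem stmt_12 (ρ σ Δ b θ k₂ k₀ α xv yv : ℝ)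
    (hρ : 0 < ρ) (hσ : 0 < σ) (hΔ : 0 < Δ) (hb : 0 ≤ b)
    (hθ : θ = Real.sqrt (2 * ρ) / σ)
    (hα : α = (Δ + b) / Δ ^ 2)
    (hxv : xv = Δ * (Δ + 2 * b) / (2 * (Δ + b)))
    (hyv : yv = Δ ^ 2 / (4 * (Δ + b)))
    (hk₂ : k₂ = α / ρ)
    (hk₀ : k₀ = yv / ρ - 2 * k₂ / θ ^ 2)
    (ybarA : ℝ → ℝ)
    (hybarA : ∀ A : ℝ, 0 < A → A < k₂ / θ ^ 2 →
      0 < ybarA A ∧ hFun θ k₂ A (ybarA A) = 0)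
    (Ac : ℝ → ℝ)
    (hAc : ∀ c : ℝ, 0 < c →
      0 < Ac c ∧ Ac c < k₂ / θ ^ 2 ∧ gFun θ k₂ ybarA (Ac c) = c) :
    Filter.Tendsto Ac (nhdsWithin 0 (Set.Ioi 0)) (nhds (k₂ / θ ^ 2)) ∧
    ∀ x : ℝ,
      Filter.Tendsto (fun c => VFun θ k₂ k₀ xv Ac (fun c => ybarA (Ac c)) c x)
        (nhdsWithin 0 (Set.Ioi 0)) (nhds (yv / ρ)) :=
  stmt_12_general ρ θ k₂ k₀ xv yv hk₀ ybarA hybarA Ac hAc
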